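/- Let u₁, ..., u_n ∈ [0,1], let a > 0, let φ_U(x) = (sin x + i(1 − cos x))/x be the characteristic function of the uniform distribution on (0,1), and let φ̂_n(x) = (1/n) Σ_{j=1}^n e^{i x u_j}. Then n ∫_{−∞}^{∞} |φ_U(x) − φ̂_n(x)|² e^{−a|x|} dx = (1/n) Σ_{j=1}^n Σ_{k=1}^n 2a/((u_j − u_k)² + a²) + 2n[2 arctan(1/a) − a log(1 + 1/a²)] − 4 Σ_{j=1}^n [arctan(u_j/a) + arctan((1 − u_j)/a)]. -/

import Mathlib

/-!
Expanding the square, `‖φ_U - φ̂ₙ‖²` splits into `|φ_U(x)|² = (2 - 2 cos x) / x²`, the cross terms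
`Re (φ_U(x) e^{-ixu}) = (sin (ux) + sin ((1 - u) x)) / x` and
`|∑ⱼ e^{ixuⱼ}|² = ∑ⱼ ∑ₖ cos ((uⱼ - uₖ) x)`. Against the weight `e^{-a|x|}`, `cos (bx)` integrates to
`2a / (b² + a²)`, the real part of `2 ∫₀^∞ e^{(ib - a) x} dx`. Writing `sin (bx) / x = ∫₀^b cos (tx) dt`
and `(1 - cos x) / x² = ∫₀^1 sin (tx) / x dt`, Fubini turns the other two integrals into
`∫₀^b 2a / (t² + a²) dt = 2 arctan (b / a)` and `4 ∫₀^1 arctan (t / a) dt`.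
-/

open MeasureTheory Real Complex Set Function

variable {a : ℝ}

theorem integrable_exp_neg_mul_abs (ha : 0 < a) :
    Integrable fun x : ℝ => Real.exp (-a * |x|) := by
  have hIic : IntegrableOn (fun x : ℝ => Real.exp (-a * |x|)) (Iic 0) :=
    (integrableOn_exp_mul_Iic ha 0).congr_fun
      (fun x hx => by rw [abs_of_nonpos hx, mul_neg, neg_mul, neg_neg]) measurableSet_Iic
  have hIoi : IntegrableOn (fun x : ℝ => Real.exp (-a * |x|)) (Ioi 0) :=
    (integrableOn_exp_mul_Ioi (neg_neg_of_pos ha) 0).congr_fun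
      (fun x hx => by rw [abs_of_pos hx]) measurableSet_Ioi
  rw [← integrableOn_univ, ← Iic_union_Ioi (a := (0 : ℝ))]
  exact hIic.union hIoi

theorem abs_sin_mul_div_le (b x : ℝ) : |Real.sin (b * x) / x| ≤ |b| := by
  rcases eq_or_ne x 0 with rfl | hx
  · simp
  rw [abs_div, div_le_iff₀ (abs_pos.mpr hx), ← abs_mul]
  exact Real.abs_sin_le_abs

theorem abs_two_sub_two_cos_div_sq_le_one (x : ℝ) : |(2 - 2 * Real.cos x) / x ^ 2| ≤ 1 := by
  rcases eq_or_ne x 0 with rfl | hx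
  · simp
  rw [abs_of_nonneg (div_nonneg (by linarith [Real.cos_le_one x]) (sq_nonneg x)),
    div_le_one (by positivity)]
  linarith [Real.one_sub_sq_div_two_le_cos (x := x)]

theorem integrable_cos_mul_mul_exp_neg_mul_abs (ha : 0 < a) (b : ℝ) :
    Integrable fun x => Real.cos (b * x) * Real.exp (-a * |x|) :=
  (integrable_exp_neg_mul_abs ha).mono' (by fun_prop) <| ae_of_all _ fun x => by
    rw [Real.norm_eq_abs, abs_mul, abs_of_pos (Real.exp_pos _)]
    exact mul_le_of_le_one_left (Real.exp_pos _).le (Real.abs_cos_le_one _)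

theorem integrable_sin_mul_div_mul_exp_neg_mul_abs (ha : 0 < a) (b : ℝ) :
    Integrable fun x => Real.sin (b * x) / x * Real.exp (-a * |x|) :=
  ((integrable_exp_neg_mul_abs ha).const_mul |b|).mono' (by fun_prop) <| ae_of_all _ fun x => by
    rw [Real.norm_eq_abs, abs_mul, abs_of_pos (Real.exp_pos _)]
    exact mul_le_mul_of_nonneg_right (abs_sin_mul_div_le b x) (Real.exp_pos _).le

theorem integrable_two_sub_two_cos_div_sq_mul_exp_neg_mul_abs (ha : 0 < a) :
    Integrable fun x => (2 - 2 * Real.cos x) / x ^ 2 * Real.exp (-a * |x|) :=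
  (integrable_exp_neg_mul_abs ha).mono' (by fun_prop) <| ae_of_all _ fun x => by
    rw [Real.norm_eq_abs, abs_mul, abs_of_pos (Real.exp_pos _)]
    exact mul_le_of_le_one_left (Real.exp_pos _).le (abs_two_sub_two_cos_div_sq_le_one x)

theorem integral_intervalIntegral_swap_of_abs_le {f : ℝ → ℝ → ℝ} {g w : ℝ → ℝ} {c d : ℝ}
    (hg : Continuous g) (hw : Integrable w)
    (hf : AEStronglyMeasurable (uncurry f) ((volume.restrict (uIoc c d)).prod volume))
    (hfg : ∀ t x, |f t x| ≤ g t * w x) :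
    ∫ x, ∫ t in c..d, f t x = ∫ t in c..d, ∫ x, f t x :=
  (intervalIntegral_integral_swap <|
    (hg.integrableOn_uIoc.mul_prod hw).mono' hf (ae_of_all _ fun p => hfg p.1 p.2)).symm

theorem ae_ne_zero : ∀ᵐ x : ℝ, x ≠ 0 :=
  compl_mem_ae_iff.mpr (measure_singleton 0)

theorem integral_cos_mul_mul_exp_neg_mul_Ioi (ha : 0 < a) (b : ℝ) :
    ∫ x in Ioi (0 : ℝ), Real.cos (b * x) * Real.exp (-a * x) = a / (a ^ 2 + b ^ 2) := by
  have hre : ∀ x : ℝ, Real.cos (b * x) * Real.exp (-a * x)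
      = (Complex.exp ((-a + b * I) * x)).re := by
    intro x
    simp [Complex.exp_re, mul_comm]
  have hz : (-a + b * I : ℂ).re < 0 := by simpa using ha
  have hintegral_re := integral_re (integrableOn_exp_mul_complex_Ioi hz 0)
  simp only [RCLike.re_to_complex] at hintegral_re
  simp_rw [hre]
  rw [hintegral_re, integral_exp_mul_complex_Ioi hz 0]
  simp [Complex.normSq_apply, ← sq, neg_div]

theorem integral_cos_mul_mul_exp_neg_mul_abs (ha : 0 < a) (b : ℝ) :
    ∫ x, Real.cos (b * x) * Real.exp (-a * |x|) = 2 * a / (b ^ 2 + a ^ 2) := by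
  have heven : (fun x => Real.cos (b * x) * Real.exp (-a * |x|))
      = fun x => Real.cos (b * |x|) * Real.exp (-a * |x|) := by
    ext x
    rcases abs_choice x with h | h <;> simp only [h, mul_neg, Real.cos_neg]
  rw [heven, integral_comp_abs (f := fun t => Real.cos (b * t) * Real.exp (-a * t)),
    integral_cos_mul_mul_exp_neg_mul_Ioi ha]
  ring

theorem integral_sin_mul_div_mul_exp_neg_mul_abs (ha : 0 < a) (b : ℝ) :
    ∫ x, Real.sin (b * x) / x * Real.exp (-a * |x|) = 2 * Real.arctan (b / a) := by
  have hslice : ∀ x : ℝ, x ≠ 0 →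
      ∫ t in (0 : ℝ)..b, Real.cos (t * x) * Real.exp (-a * |x|)
        = Real.sin (b * x) / x * Real.exp (-a * |x|) := by
    intro x hx
    rw [intervalIntegral.integral_mul_const, intervalIntegral.integral_comp_mul_right _ hx]
    simp [integral_cos, div_eq_inv_mul]
  calc ∫ x, Real.sin (b * x) / x * Real.exp (-a * |x|)
      = ∫ x, ∫ t in (0 : ℝ)..b, Real.cos (t * x) * Real.exp (-a * |x|) :=
        integral_congr_ae <| ae_ne_zero.mono fun x hx => (hslice x hx).symm
    _ = ∫ t in (0 : ℝ)..b, ∫ x, Real.cos (t * x) * Real.exp (-a * |x|) :=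
        integral_intervalIntegral_swap_of_abs_le continuous_const (integrable_exp_neg_mul_abs ha)
          (by fun_prop) fun t x => by
            rw [abs_mul, abs_of_pos (Real.exp_pos _), one_mul]
            exact mul_le_of_le_one_left (Real.exp_pos _).le (Real.abs_cos_le_one _)
    _ = 2 * ∫ t in (0 : ℝ)..b, a / (a ^ 2 + t ^ 2) := by
        simp_rw [integral_cos_mul_mul_exp_neg_mul_abs ha, ← intervalIntegral.integral_const_mul]
        congr 1 with t
        ring
    _ = 2 * Real.arctan (b / a) := by simp [integral_div_sq_add_sq]

theorem integral_arctan_div (ha : a ≠ 0) (b : ℝ) :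
    ∫ t in (0 : ℝ)..b, Real.arctan (t / a)
      = b * Real.arctan (b / a) - a / 2 * Real.log (1 + (b / a) ^ 2) := by
  have hderiv : ∀ t : ℝ, HasDerivAt
      (fun t => t * Real.arctan (t / a) - a / 2 * Real.log (1 + (t / a) ^ 2))
      (Real.arctan (t / a)) t := by
    intro t
    have hpos : 0 < 1 + (t / a) ^ 2 := by positivity
    have hdiv : HasDerivAt (fun t : ℝ => t / a) (1 / a) t := (hasDerivAt_id t).div_const a
    have hmul : HasDerivAt (fun t => t * Real.arctan (t / a))
        (1 * Real.arctan (t / a) + t * (1 / (1 + (t / a) ^ 2) * (1 / a))) t :=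
      (hasDerivAt_id t).mul ((Real.hasDerivAt_arctan _).comp t hdiv)
    have hlog : HasDerivAt (fun t => Real.log (1 + (t / a) ^ 2))
        (2 * (t / a) * (1 / a) / (1 + (t / a) ^ 2)) t := by
      simpa using ((hdiv.pow 2).const_add 1).log hpos.ne'
    refine (hmul.sub (hlog.const_mul (a / 2))).congr_deriv ?_
    field_simp
    ring
  rw [intervalIntegral.integral_eq_sub_of_hasDerivAt (fun t _ => hderiv t)
    ((by fun_prop : Continuous fun t => Real.arctan (t / a)).intervalIntegrable _ _)]
  simp

theorem integral_two_sub_two_cos_div_sq_mul_exp_neg_mul_abs (ha : 0 < a) :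
    ∫ x, (2 - 2 * Real.cos x) / x ^ 2 * Real.exp (-a * |x|)
      = 2 * (2 * Real.arctan (1 / a) - a * Real.log (1 + 1 / a ^ 2)) := by
  have hslice : ∀ x : ℝ, x ≠ 0 →
      ∫ t in (0 : ℝ)..1, 2 * (Real.sin (t * x) / x * Real.exp (-a * |x|))
        = (2 - 2 * Real.cos x) / x ^ 2 * Real.exp (-a * |x|) := by
    intro x hx
    have hfactor : ∀ t, 2 * (Real.sin (t * x) / x * Real.exp (-a * |x|))
        = Real.sin (t * x) * (2 / x * Real.exp (-a * |x|)) := fun t => by ring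
    simp_rw [hfactor]
    rw [intervalIntegral.integral_mul_const, intervalIntegral.integral_comp_mul_right _ hx]
    simp only [zero_mul, one_mul, integral_sin, Real.cos_zero, smul_eq_mul]
    field_simp
  calc ∫ x, (2 - 2 * Real.cos x) / x ^ 2 * Real.exp (-a * |x|)
      = ∫ x, ∫ t in (0 : ℝ)..1, 2 * (Real.sin (t * x) / x * Real.exp (-a * |x|)) :=
        integral_congr_ae <| ae_ne_zero.mono fun x hx => (hslice x hx).symm
    _ = ∫ t in (0 : ℝ)..1, ∫ x, 2 * (Real.sin (t * x) / x * Real.exp (-a * |x|)) :=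
        integral_intervalIntegral_swap_of_abs_le (g := fun t => 2 * |t|) (by fun_prop)
          (integrable_exp_neg_mul_abs ha) (by fun_prop) fun t x => by
            have := mul_le_mul_of_nonneg_right (abs_sin_mul_div_le t x) (Real.exp_pos (-a * |x|)).le
            rw [abs_mul, abs_mul, abs_two, abs_of_pos (Real.exp_pos _)]
            linarith
    _ = 4 * ∫ t in (0 : ℝ)..1, Real.arctan (t / a) := by
        rw [← intervalIntegral.integral_const_mul]
        congr 1 with t
        rw [MeasureTheory.integral_const_mul, integral_sin_mul_div_mul_exp_neg_mul_abs ha]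
        ring
    _ = 2 * (2 * Real.arctan (1 / a) - a * Real.log (1 + 1 / a ^ 2)) := by
        rw [integral_arctan_div ha.ne', div_pow, one_pow]
        ring

theorem sum_cos_sq_add_sum_sin_sq {ι : Type*} (s : Finset ι) (θ : ι → ℝ) :
    (∑ i ∈ s, Real.cos (θ i)) ^ 2 + (∑ i ∈ s, Real.sin (θ i)) ^ 2
      = ∑ i ∈ s, ∑ j ∈ s, Real.cos (θ i - θ j) := by
  simp_rw [sq, Finset.sum_mul_sum, ← Finset.sum_add_distrib, Real.cos_sub]

-- No `x ≠ 0` is needed: at `x = 0` both sides are `c² (#s)²`, since `/ 0 = 0`.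
theorem norm_sq_sub_mul_sum_exp {ι : Type*} (s : Finset ι) (u : ι → ℝ) (c x : ℝ) :
    ‖((Real.sin x : ℂ) + I * (1 - (Real.cos x : ℂ))) / (x : ℂ)
        - (c : ℂ) * ∑ j ∈ s, Complex.exp (I * (x : ℂ) * (u j : ℂ))‖ ^ 2
      = (2 - 2 * Real.cos x) / x ^ 2
        - 2 * c * ∑ j ∈ s, (Real.sin (u j * x) / x + Real.sin ((1 - u j) * x) / x)
        + c ^ 2 * ∑ j ∈ s, ∑ k ∈ s, Real.cos ((u j - u k) * x) := by
  have hexp : ∀ j, Complex.exp (I * (x : ℂ) * (u j : ℂ)) = Complex.exp ((u j * x : ℝ) * I) :=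
    fun j => by push_cast; ring_nf
  have hsin : ∀ j, Real.sin ((1 - u j) * x)
      = Real.sin x * Real.cos (u j * x) - Real.cos x * Real.sin (u j * x) := fun j => by
    rw [← Real.sin_sub]; ring_nf
  have hcross : ∑ j ∈ s, (Real.sin (u j * x) / x + Real.sin ((1 - u j) * x) / x)
      = (Real.sin x * ∑ j ∈ s, Real.cos (u j * x)
          + (1 - Real.cos x) * ∑ j ∈ s, Real.sin (u j * x)) / x := by
    simp_rw [hsin, Finset.mul_sum, ← Finset.sum_add_distrib, Finset.sum_div]
    exact Finset.sum_congr rfl fun j _ => by ring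
  have hdiag : ∑ j ∈ s, ∑ k ∈ s, Real.cos ((u j - u k) * x)
      = (∑ j ∈ s, Real.cos (u j * x)) ^ 2 + (∑ j ∈ s, Real.sin (u j * x)) ^ 2 := by
    simp_rw [sum_cos_sq_add_sum_sin_sq, sub_mul]
  rw [Complex.sq_norm, Complex.normSq_apply, hcross, hdiag]
  simp only [hexp, Complex.sub_re, Complex.sub_im, Complex.div_ofReal_re, Complex.div_ofReal_im,
    Complex.re_sum, Complex.im_sum,
    Complex.exp_ofReal_mul_I_re, Complex.exp_ofReal_mul_I_im, Complex.add_re, Complex.add_im,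
    Complex.ofReal_re, Complex.ofReal_im, Complex.mul_re, Complex.mul_im, Complex.I_re,
    Complex.I_im, Complex.one_re, Complex.one_im]
  linear_combination (x⁻¹ ^ 2) * Real.sin_sq_add_cos_sq x

theorem integral_norm_sq_sub_mul_sum_exp_mul_exp_neg_mul_abs (ha : 0 < a) {ι : Type*}
    (s : Finset ι) (u : ι → ℝ) (c : ℝ) :
    ∫ x : ℝ, ‖((Real.sin x : ℂ) + I * (1 - (Real.cos x : ℂ))) / (x : ℂ)
        - (c : ℂ) * ∑ j ∈ s, Complex.exp (I * (x : ℂ) * (u j : ℂ))‖ ^ 2 * Real.exp (-a * |x|)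
      = 2 * (2 * Real.arctan (1 / a) - a * Real.log (1 + 1 / a ^ 2))
        - 2 * c * ∑ j ∈ s, (2 * Real.arctan (u j / a) + 2 * Real.arctan ((1 - u j) / a))
        + c ^ 2 * ∑ j ∈ s, ∑ k ∈ s, 2 * a / ((u j - u k) ^ 2 + a ^ 2) := by
  have hC := integrable_two_sub_two_cos_div_sq_mul_exp_neg_mul_abs ha
  have hS := integrable_sin_mul_div_mul_exp_neg_mul_abs ha
  have hK := integrable_cos_mul_mul_exp_neg_mul_abs ha
  have hexpand : ∀ x : ℝ, ‖((Real.sin x : ℂ) + I * (1 - (Real.cos x : ℂ))) / (x : ℂ)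
        - (c : ℂ) * ∑ j ∈ s, Complex.exp (I * (x : ℂ) * (u j : ℂ))‖ ^ 2 * Real.exp (-a * |x|)
      = (2 - 2 * Real.cos x) / x ^ 2 * Real.exp (-a * |x|)
        - 2 * c * ∑ j ∈ s, (Real.sin (u j * x) / x * Real.exp (-a * |x|)
            + Real.sin ((1 - u j) * x) / x * Real.exp (-a * |x|))
        + c ^ 2 * ∑ j ∈ s, ∑ k ∈ s, Real.cos ((u j - u k) * x) * Real.exp (-a * |x|) := by
    intro x
    rw [norm_sq_sub_mul_sum_exp]
    simp only [← add_mul, ← Finset.sum_mul]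
    ring
  simp_rw [hexpand]
  rw [integral_add (by fun_prop) (by fun_prop), integral_sub hC (by fun_prop),
    integral_const_mul, integral_const_mul,
    integral_finsetSum _ fun j _ => by fun_prop, integral_finsetSum _ fun j _ => by fun_prop,
    integral_two_sub_two_cos_div_sq_mul_exp_neg_mul_abs ha]
  simp_rw [integral_finsetSum _ fun k _ => hK _, integral_add (hS _) (hS _),
    integral_sin_mul_div_mul_exp_neg_mul_abs ha, integral_cos_mul_mul_exp_neg_mul_abs ha]

theorem stmt15_general (n : ℕ) (u : Fin n → ℝ)
    (a : ℝ) (ha : 0 < a)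
    (φU : ℝ → ℂ)
    (hφU : ∀ x : ℝ, φU x = ((Real.sin x : ℂ) + Complex.I * (1 - (Real.cos x : ℂ))) / (x : ℂ))
    (φn : ℝ → ℂ)
    (hφn : ∀ x : ℝ, φn x = (n : ℂ)⁻¹ * ∑ j, Complex.exp (Complex.I * (x : ℂ) * (u j : ℂ))) :
    (n : ℝ) * ∫ x : ℝ, ‖φU x - φn x‖ ^ 2 * Real.exp (-a * |x|) =
      (n : ℝ)⁻¹ * (∑ j, ∑ k, 2 * a / ((u j - u k) ^ 2 + a ^ 2))
      + 2 * (n : ℝ) * (2 * Real.arctan (1 / a) - a * Real.log (1 + 1 / a ^ 2))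
      - 4 * ∑ j, (Real.arctan (u j / a) + Real.arctan ((1 - u j) / a)) := by
  obtain rfl | hn := Nat.eq_zero_or_pos n
  · simp
  simp_rw [hφU, hφn, ← Complex.ofReal_natCast, ← Complex.ofReal_inv,
    integral_norm_sq_sub_mul_sum_exp_mul_exp_neg_mul_abs ha, ← mul_add, ← Finset.mul_sum]
  field_simp
  ring

/-- Closed form of the characteristic-function-based statistic `S_{n,a}`:
for `u₁, …, uₙ ∈ [0,1]` and `a > 0`,
`n ∫ |φ_U(x) - φ̂ₙ(x)|² e^{-a|x|} dx` equals the stated triple-sum expression,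
where `φ_U` is the cf of the uniform distribution on `(0,1)` and `φ̂ₙ` is the ecf. -/
theorem stmt15 (n : ℕ) (hn : 0 < n) (u : Fin n → ℝ) (hu : ∀ j, u j ∈ Set.Icc (0:ℝ) 1)
    (a : ℝ) (ha : 0 < a)
    (φU : ℝ → ℂ)
    (hφU : ∀ x : ℝ, φU x = ((Real.sin x : ℂ) + Complex.I * (1 - (Real.cos x : ℂ))) / (x : ℂ))
    (φn : ℝ → ℂ)
    (hφn : ∀ x : ℝ, φn x = (n : ℂ)⁻¹ * ∑ j, Complex.exp (Complex.I * (x : ℂ) * (u j : ℂ))) :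
    (n : ℝ) * ∫ x : ℝ, ‖φU x - φn x‖ ^ 2 * Real.exp (-a * |x|) =
      (n : ℝ)⁻¹ * (∑ j, ∑ k, 2 * a / ((u j - u k) ^ 2 + a ^ 2))
      + 2 * (n : ℝ) * (2 * Real.arctan (1 / a) - a * Real.log (1 + 1 / a ^ 2))
      - 4 * ∑ j, (Real.arctan (u j / a) + Real.arctan ((1 - u j) / a)) :=
  stmt15_general n u a ha φU hφU φn hφn
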